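/- Let a ≠ 0 and let v : ℝ² → ℝ be smooth and satisfy v_xy = (1/3) e^v - (a³/6) e^{-2v}. Define u = 2 v_x and f = e^v - u_y (so u_y = 2 v_xy). Then: (i) (f + u_y)² (2f - u_y) - a³ = 0 identically; and (ii) u_xy = f · u identically. -/

import Mathlib

private lemma hasDerivAt_fst {G : ℝ × ℝ → ℝ} {x y : ℝ}
    (hG : DifferentiableAt ℝ G (x, y)) :
    HasDerivAt (fun x' => G (x', y)) (fderiv ℝ G (x, y) (1, 0)) x :=
  hG.hasFDerivAt.comp_hasDerivAt x ((hasDerivAt_id x).prodMk (hasDerivAt_const x y))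

private lemma hasDerivAt_snd {G : ℝ × ℝ → ℝ} {x y : ℝ}
    (hG : DifferentiableAt ℝ G (x, y)) :
    HasDerivAt (fun y' => G (x, y')) (fderiv ℝ G (x, y) (0, 1)) y :=
  hG.hasFDerivAt.comp_hasDerivAt y ((hasDerivAt_const y x).prodMk (hasDerivAt_id y))

theorem tzitzeica_transformation (a : ℝ) (ha : a ≠ 0) (v : ℝ → ℝ → ℝ)
    (hv : ContDiff ℝ (⊤ : ℕ∞) (fun p : ℝ × ℝ => v p.1 p.2))
    (heq : ∀ x y : ℝ,
      deriv (fun y' => deriv (fun x' => v x' y') x) y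
        = (1 / 3) * Real.exp (v x y) - (a ^ 3 / 6) * Real.exp (-2 * v x y)) :
    let u : ℝ → ℝ → ℝ := fun x y => 2 * deriv (fun x' => v x' y) x
    let uy : ℝ → ℝ → ℝ := fun x y => deriv (fun y' => u x y') y
    let f : ℝ → ℝ → ℝ := fun x y => Real.exp (v x y) - uy x y
    (∀ x y : ℝ,
      (f x y + uy x y) ^ 2 * (2 * f x y - uy x y) - a ^ 3 = 0) ∧
    (∀ x y : ℝ,
      deriv (fun y' => deriv (fun x' => u x' y') x) y = f x y * u x y) := by
  intro u uy f
  set F : ℝ × ℝ → ℝ := fun p : ℝ × ℝ => v p.1 p.2 with hF_def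
  have hF : ContDiff ℝ (⊤ : ℕ∞) F := hv
  set G1 : ℝ × ℝ → ℝ := fun p => fderiv ℝ F p (1, 0) with hG1_def
  have hG1 : ContDiff ℝ (⊤ : ℕ∞) G1 :=
    (hF.fderiv_right (by simp)).clm_apply contDiff_const
  -- v_x = G1
  have hvx : ∀ x y : ℝ, deriv (fun x' => v x' y) x = G1 (x, y) := fun x y =>
    (hasDerivAt_fst (hF.differentiable (by simp)).differentiableAt).deriv
  -- mixed derivative v_xy = fderiv G1 _ (0,1)
  have hG1y : ∀ x y : ℝ, deriv (fun y' => G1 (x, y')) y = fderiv ℝ G1 (x, y) (0, 1) :=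
    fun x y => (hasDerivAt_snd (hG1.differentiable (by simp)).differentiableAt).deriv
  have hmix : ∀ x y : ℝ, fderiv ℝ G1 (x, y) (0, 1)
      = (1 / 3) * Real.exp (v x y) - (a ^ 3 / 6) * Real.exp (-2 * v x y) := by
    intro x y
    rw [← hG1y]
    have : (fun y' => G1 (x, y')) = fun y' => deriv (fun x' => v x' y') x := by
      funext y'; rw [hvx]
    rw [this, heq]
  -- uy value
  have huy : ∀ x y : ℝ, uy x y
      = (2 / 3) * Real.exp (v x y) - (a ^ 3 / 3) * Real.exp (-2 * v x y) := by
    intro x y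
    have h1 : (fun y' => u x y') = fun y' => 2 * G1 (x, y') := by
      funext y'; show 2 * deriv (fun x' => v x' y') x = _; rw [hvx]
    show deriv (fun y' => u x y') y = _
    rw [h1, deriv_const_mul_field, hG1y, hmix]
    ring
  have hprod : ∀ x y : ℝ, Real.exp (v x y) ^ 2 * Real.exp (-2 * v x y) = 1 := by
    intro x y
    rw [sq, ← Real.exp_add, ← Real.exp_add, ← Real.exp_zero]
    ring_nf
  constructor
  · intro x y
    have hf : f x y = Real.exp (v x y) - uy x y := rfl
    rw [hf, huy]
    have hpr := hprod x y
    linear_combination a ^ 3 * hpr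
  · intro x y
    -- second x-derivative direction
    set G2 : ℝ × ℝ → ℝ := fun p => fderiv ℝ G1 p (1, 0) with hG2_def
    have hG1' : ContDiff ℝ (⊤ : ℕ∞) (fderiv ℝ G1) := hG1.fderiv_right (by simp)
    have hG2 : ContDiff ℝ (⊤ : ℕ∞) G2 := hG1'.clm_apply contDiff_const
    -- u_x = 2 * G2
    have hux : ∀ y' : ℝ, deriv (fun x' => u x' y') x = 2 * G2 (x, y') := by
      intro y'
      have h1 : (fun x' => u x' y') = fun x' => 2 * G1 (x', y') := by
        funext x'; show 2 * deriv (fun t => v t y') x' = _; rw [hvx]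
      rw [h1, deriv_const_mul_field,
        (hasDerivAt_fst (hG1.differentiable (by simp)).differentiableAt).deriv]
    have hLHS : deriv (fun y' => deriv (fun x' => u x' y') x) y
        = 2 * fderiv ℝ G2 (x, y) (0, 1) := by
      have h1 : (fun y' => deriv (fun x' => u x' y') x) = fun y' => 2 * G2 (x, y') := by
        funext y'; exact hux y'
      rw [h1, deriv_const_mul_field,
        (hasDerivAt_snd (hG2.differentiable (by simp)).differentiableAt).deriv]
    -- compute fderiv G2 (x,y) (0,1) via symmetry of second derivative of G1
    have hsymm : fderiv ℝ (fderiv ℝ G1) (x, y) (0, 1) (1, 0)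
        = fderiv ℝ (fderiv ℝ G1) (x, y) (1, 0) (0, 1) :=
      (hG1.contDiffAt.isSymmSndFDerivAt (by rw [minSmoothness_of_isRCLikeNormedField]; exact WithTop.coe_le_coe.2 le_top)) _ _
    have hG2fd : ∀ w : ℝ × ℝ, fderiv ℝ G2 (x, y) w = fderiv ℝ (fderiv ℝ G1) (x, y) w (1, 0) := by
      intro w
      have h := ((hG1'.differentiable (by simp)).differentiableAt (x := (x, y))).hasFDerivAt.clm_apply
        (hasFDerivAt_const ((1 : ℝ), (0 : ℝ)) (x, y))
      rw [h.fderiv]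
      simp
    -- the function p ↦ fderiv G1 p (0,1) equals the RHS function
    set H : ℝ × ℝ → ℝ := fun p => fderiv ℝ G1 p (0, 1) with hH_def
    have hH : ∀ p : ℝ × ℝ, H p
        = (1 / 3) * Real.exp (v p.1 p.2) - (a ^ 3 / 6) * Real.exp (-2 * v p.1 p.2) :=
      fun p => hmix p.1 p.2
    have hHfd : fderiv ℝ (fderiv ℝ G1) (x, y) (1, 0) (0, 1) = fderiv ℝ H (x, y) (1, 0) := by
      have h := ((hG1'.differentiable (by simp)).differentiableAt (x := (x, y))).hasFDerivAt.clm_apply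
        (hasFDerivAt_const ((0 : ℝ), (1 : ℝ)) (x, y))
      rw [h.fderiv]
      simp
    -- compute fderiv H (x,y) (1,0) = deriv of RHS in x
    have hvd : HasDerivAt (fun x' => v x' y) (G1 (x, y)) x := by
      have := hasDerivAt_fst (G := F)
        ((hF.differentiable (by simp)).differentiableAt (x := (x, y)))
      exact this
    have hHx : fderiv ℝ H (x, y) (1, 0)
        = (1 / 3) * Real.exp (v x y) * G1 (x, y)
          + (a ^ 3 / 3) * Real.exp (-2 * v x y) * G1 (x, y) := by
      have hfun : (fun x' => H (x', y))
          = fun x' => (1 / 3) * Real.exp (v x' y) - (a ^ 3 / 6) * Real.exp (-2 * v x' y) := by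
        funext x'; exact hH (x', y)
      have hd : HasDerivAt (fun x' => H (x', y))
          ((1 / 3) * (Real.exp (v x y) * G1 (x, y))
            - (a ^ 3 / 6) * (Real.exp (-2 * v x y) * (-2 * G1 (x, y)))) x := by
        rw [hfun]
        exact ((hvd.exp).const_mul ((1:ℝ)/3)).sub
          ((((hvd.const_mul (-2)).exp).const_mul (a ^ 3 / 6)))
      have hthis : fderiv ℝ H (x, y) (1, 0)
          = (1 / 3) * (Real.exp (v x y) * G1 (x, y))
            - (a ^ 3 / 6) * (Real.exp (-2 * v x y) * (-2 * G1 (x, y))) :=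
        (hasDerivAt_fst (G := H) ((hG1'.clm_apply contDiff_const : ContDiff ℝ (⊤ : ℕ∞) H
          ).differentiable (by simp)).differentiableAt).unique hd
      rw [hthis]; ring
    have hG1e : u x y = 2 * G1 (x, y) := by
      show 2 * deriv (fun x' => v x' y) x = _; rw [hvx]
    have hfval : f x y = (1 / 3) * Real.exp (v x y) + (a ^ 3 / 3) * Real.exp (-2 * v x y) := by
      show Real.exp (v x y) - uy x y = _
      rw [huy]; ring
    rw [hLHS, hG2fd, hsymm, hHfd, hHx, hfval, hG1e]
    ring
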